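/- Let k ≥ 1 and r ≥ 0 be integers and Q₁, …, Q_k ∈ ℂ[z] polynomials with deg Qᵢ ≤ i + r for 1 ≤ i ≤ k and deg Q_k = k + r. Let ℛ be the maximum of the moduli of the roots of Q_k. For every δ > 0 there exists a natural number N_δ such that for all n ≥ N_δ the following holds: if V ∈ ℂ[z] with deg V ≤ r and a nonzero polynomial S ∈ ℂ[z] of degree exactly n satisfy Σ_{i=1}^k Qᵢ·S^{(i)} + V·S = 0, then every root of V and every root of S has modulus at most ℛ + δ. -/

import Mathlib

/-!
Let `w` be a zero of `V * S` with `‖w‖ > ℛ + δ / 2` that dominates all zeros of `S`; then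
`Q k` does not vanish at `w`. If `w` is a zero of `S` of multiplicity `m > k`, differentiating the
equation `m - k` times and evaluating at `w` leaves `Q k (w) * S⁽ᵐ⁾(w) = 0`, which is impossible.
Otherwise the equation at `w` reads `∑ Qᵢ(w) S⁽ⁱ⁾(w) = 0`. By Gauss–Lucas all zeros of `S⁽ʲ⁾` lie in
the disc of radius `‖w‖`, so `Re (w S⁽ʲ⁺¹⁾(w) / S⁽ʲ⁾(w)) ≥ (n - j) / 2`; iterating,
`(n - k + 1)^(k - i) |S⁽ⁱ⁾(w)| ≤ (2‖w‖)^(k - i) |S⁽ᵏ⁾(w)|` and `S⁽ᵏ⁾(w) ≠ 0`. The degree bounds give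
`(2‖w‖)^(k - i) |Qᵢ(w)| ≤ A |Q k (w)|` uniformly in `‖w‖ > ℛ + δ / 2`, and the equation then forces
`n - k + 1 ≤ (k - 1) A`.
-/

open Polynomial Finset Filter

theorem Complex.half_le_re_div_sub {z w : ℂ} (h : ‖z‖ ≤ ‖w‖) (hne : w ≠ z) :
    1 / 2 ≤ (w / (w - z)).re := by
  have hpos : 0 < Complex.normSq (w - z) := Complex.normSq_pos.2 (sub_ne_zero.2 hne)
  have hsq : Complex.normSq z ≤ Complex.normSq w := by
    simpa only [← Complex.sq_norm] using pow_le_pow_left₀ (norm_nonneg z) h 2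
  rw [Complex.div_re, ← add_div, le_div_iff₀ hpos]
  simp only [Complex.normSq_apply, Complex.sub_re, Complex.sub_im] at hsq ⊢
  nlinarith

namespace Polynomial

variable {P S : ℂ[X]} {w : ℂ}

theorem natDegree_div_two_le_re_mul_eval_derivative_div
    (hroots : ∀ z ∈ P.roots, ‖z‖ ≤ ‖w‖) (hw : P.eval w ≠ 0) :
    (P.natDegree : ℝ) / 2 ≤ (w * (derivative P).eval w / P.eval w).re := by
  have hP := IsAlgClosed.splits P
  have hre (s : Multiset ℂ) : s.sum.re = (s.map Complex.re).sum :=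
    map_multiset_sum Complex.reAddGroupHom s
  rw [mul_div_assoc, hP.eval_derivative_div_eval_of_ne_zero hw, ← Multiset.sum_map_mul_left, hre,
    Multiset.map_map, ← splits_iff_card_roots.1 hP, div_eq_mul_one_div, ← nsmul_eq_mul,
    ← Multiset.card_map (Complex.re ∘ _)]
  refine Multiset.card_nsmul_le_sum fun x hx => ?_
  obtain ⟨z, hz, rfl⟩ := Multiset.mem_map.1 hx
  have hwz : w ≠ z := fun h => hw (h ▸ (isRoot_of_mem_roots hz).eq_zero)
  simpa only [Function.comp_apply, mul_one_div] using Complex.half_le_re_div_sub (hroots z hz) hwz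

theorem natDegree_mul_norm_eval_le (hroots : ∀ z ∈ P.roots, ‖z‖ ≤ ‖w‖) :
    P.natDegree * ‖P.eval w‖ ≤ 2 * ‖w‖ * ‖(derivative P).eval w‖ := by
  rcases eq_or_ne (P.eval w) 0 with hw | hw
  · rw [hw, norm_zero, mul_zero]
    positivity
  have hpos : 0 < ‖P.eval w‖ := norm_pos_iff.2 hw
  have h := (natDegree_div_two_le_re_mul_eval_derivative_div hroots hw).trans (Complex.re_le_norm _)
  rw [norm_div, norm_mul, le_div_iff₀ hpos] at h
  linarith

theorem norm_le_of_mem_roots_derivative {ρ : ℝ} (hroots : ∀ z ∈ P.roots, ‖z‖ ≤ ρ) :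
    ∀ z ∈ (derivative P).roots, ‖z‖ ≤ ρ := by
  intro z hz
  have hP' : derivative P ≠ 0 := (mem_roots'.1 hz).1
  have hdeg : 0 < P.degree := by
    rw [← natDegree_pos_iff_degree_pos, Nat.pos_iff_ne_zero]
    exact derivative_ne_zero.1 hP'
  have hhull : convexHull ℝ (P.rootSet ℂ) ⊆ Metric.closedBall 0 ρ := by
    refine convexHull_min (fun x hx => mem_closedBall_zero_iff.2 (hroots x ?_))
      (convex_closedBall 0 ρ)
    rw [mem_rootSet, coe_aeval_eq_eval] at hx
    exact (mem_roots hx.1).2 hx.2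
  refine mem_closedBall_zero_iff.1 (hhull (rootSet_derivative_subset_convexHull_rootSet hdeg ?_))
  rw [mem_rootSet, coe_aeval_eq_eval]
  exact ⟨hP', (mem_roots hP').1 hz⟩

theorem norm_le_of_mem_roots_iterate_derivative {ρ : ℝ} (hroots : ∀ z ∈ P.roots, ‖z‖ ≤ ρ)
    (j : ℕ) : ∀ z ∈ (derivative^[j] P).roots, ‖z‖ ≤ ρ := by
  induction j with
  | zero => exact hroots
  | succ j ih =>
    rw [Function.iterate_succ_apply']
    exact norm_le_of_mem_roots_derivative ih

theorem natDegree_iterate_derivative_eq_sub {R : Type*} [Semiring R] [IsAddTorsionFree R]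
    (p : R[X]) (j : ℕ) : (derivative^[j] p).natDegree = p.natDegree - j := by
  induction j with
  | zero => rfl
  | succ j ih => rw [Function.iterate_succ_apply', natDegree_derivative, ih, Nat.sub_sub]

theorem sub_mul_norm_eval_iterate_derivative_le (hroots : ∀ z ∈ S.roots, ‖z‖ ≤ ‖w‖) (j : ℕ) :
    ((S.natDegree : ℝ) - j) * ‖(derivative^[j] S).eval w‖ ≤
      2 * ‖w‖ * ‖(derivative^[j + 1] S).eval w‖ := by
  have hsub : (S.natDegree : ℝ) - j ≤ (derivative^[j] S).natDegree := by
    rw [natDegree_iterate_derivative_eq_sub]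
    rcases le_total j S.natDegree with h | h
    · rw [Nat.cast_sub h]
    · simp [Nat.sub_eq_zero_of_le h, h]
  rw [Function.iterate_succ_apply']
  exact (mul_le_mul_of_nonneg_right hsub (norm_nonneg _)).trans
    (natDegree_mul_norm_eval_le (norm_le_of_mem_roots_iterate_derivative hroots j))

theorem pow_mul_norm_eval_iterate_derivative_le (hroots : ∀ z ∈ S.roots, ‖z‖ ≤ ‖w‖) {i k : ℕ}
    (hik : i ≤ k) (hk : k ≤ S.natDegree) :
    ((S.natDegree : ℝ) - k + 1) ^ (k - i) * ‖(derivative^[i] S).eval w‖ ≤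
      (2 * ‖w‖) ^ (k - i) * ‖(derivative^[k] S).eval w‖ := by
  have ht : 0 ≤ (S.natDegree : ℝ) - k + 1 := by
    have : (k : ℝ) ≤ S.natDegree := by exact_mod_cast hk
    linarith
  induction hik using Nat.decreasingInduction with
  | self => simp
  | of_succ i hi ih =>
    have hki : k - i = k - (i + 1) + 1 := by omega
    have hstep := sub_mul_norm_eval_iterate_derivative_le hroots i
    have hti : (S.natDegree : ℝ) - k + 1 ≤ S.natDegree - i := by
      have : (i : ℝ) + 1 ≤ k := by exact_mod_cast hi
      linarith
    set t : ℝ := (S.natDegree : ℝ) - k + 1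
    rw [hki]
    calc t ^ (k - (i + 1) + 1) * ‖(derivative^[i] S).eval w‖
        = t ^ (k - (i + 1)) * (t * ‖(derivative^[i] S).eval w‖) := by ring
      _ ≤ t ^ (k - (i + 1)) * (2 * ‖w‖ * ‖(derivative^[i + 1] S).eval w‖) :=
          mul_le_mul_of_nonneg_left
            ((mul_le_mul_of_nonneg_right hti (norm_nonneg _)).trans hstep) (pow_nonneg ht _)
      _ = 2 * ‖w‖ * (t ^ (k - (i + 1)) * ‖(derivative^[i + 1] S).eval w‖) := by ring
      _ ≤ 2 * ‖w‖ * ((2 * ‖w‖) ^ (k - (i + 1)) * ‖(derivative^[k] S).eval w‖) :=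
          mul_le_mul_of_nonneg_left ih (by positivity)
      _ = (2 * ‖w‖) ^ (k - (i + 1) + 1) * ‖(derivative^[k] S).eval w‖ := by ring

theorem eval_iterate_derivative_rootMultiplicity_ne_zero {K : Type*} [Field K] [CharZero K]
    {p : K[X]} (hp : p ≠ 0) (t : K) : (derivative^[p.rootMultiplicity t] p).eval t ≠ 0 := by
  rw [eval_iterate_derivative_rootMultiplicity, nsmul_eq_mul]
  exact mul_ne_zero (Nat.cast_ne_zero.2 (Nat.factorial_ne_zero _))
    (eval_divByMonic_pow_rootMultiplicity_ne_zero t hp)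

theorem eval_iterate_derivative_ne_zero_of_rootMultiplicity_le
    (hroots : ∀ z ∈ S.roots, ‖z‖ ≤ ‖w‖) (hS : S ≠ 0) {k : ℕ} (hk : k ≤ S.natDegree)
    (hm : S.rootMultiplicity w ≤ k) : (derivative^[k] S).eval w ≠ 0 := by
  have hchain := pow_mul_norm_eval_iterate_derivative_le hroots hm hk
  have ht : 0 < (S.natDegree : ℝ) - k + 1 := by
    have : (k : ℝ) ≤ S.natDegree := by exact_mod_cast hk
    linarith
  have hpos : 0 < ((S.natDegree : ℝ) - k + 1) ^ (k - S.rootMultiplicity w) *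
      ‖(derivative^[S.rootMultiplicity w] S).eval w‖ :=
    mul_pos (pow_pos ht _) (norm_pos_iff.2 (eval_iterate_derivative_rootMultiplicity_ne_zero hS w))
  intro h
  rw [h, norm_zero, mul_zero] at hchain
  linarith

theorem natDegree_sub_le_of_sum_eq_zero (hroots : ∀ z ∈ S.roots, ‖z‖ ≤ ‖w‖) {k : ℕ}
    (hk : 1 ≤ k) (hkn : k ≤ S.natDegree) (hSk : (derivative^[k] S).eval w ≠ 0)
    {a : ℕ → ℂ} (hak : a k ≠ 0) {A : ℝ}
    (hA : ∀ i ∈ Ico 1 k, (2 * ‖w‖) ^ (k - i) * ‖a i‖ ≤ A * ‖a k‖)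
    (hsum : ∑ i ∈ Icc 1 k, a i * (derivative^[i] S).eval w = 0) :
    (S.natDegree : ℝ) - k + 1 ≤ (k - 1 : ℕ) * A := by
  set t : ℝ := (S.natDegree : ℝ) - k + 1
  set Φ : ℕ → ℂ := fun i => (derivative^[i] S).eval w
  have ht : 1 ≤ t := by
    have : (k : ℝ) ≤ S.natDegree := by exact_mod_cast hkn
    linarith
  have htop : a k * Φ k = -∑ i ∈ Ico 1 k, a i * Φ i := by
    rw [← Ico_insert_right hk, sum_insert right_notMem_Ico] at hsum
    exact eq_neg_of_add_eq_zero_left hsum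
  have hterm : ∀ i ∈ Ico 1 k, t * ‖a i * Φ i‖ ≤ A * (‖a k‖ * ‖Φ k‖) := by
    intro i hi
    have hik : i < k := (mem_Ico.1 hi).2
    have hchain : t * ‖Φ i‖ ≤ (2 * ‖w‖) ^ (k - i) * ‖Φ k‖ :=
      (mul_le_mul_of_nonneg_right (le_self_pow₀ ht (by omega)) (norm_nonneg _)).trans
        (pow_mul_norm_eval_iterate_derivative_le hroots hik.le hkn)
    calc t * ‖a i * Φ i‖ = ‖a i‖ * (t * ‖Φ i‖) := by rw [norm_mul]; ring
      _ ≤ ‖a i‖ * ((2 * ‖w‖) ^ (k - i) * ‖Φ k‖) := by gcongr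
      _ = (2 * ‖w‖) ^ (k - i) * ‖a i‖ * ‖Φ k‖ := by ring
      _ ≤ A * ‖a k‖ * ‖Φ k‖ := mul_le_mul_of_nonneg_right (hA i hi) (norm_nonneg _)
      _ = A * (‖a k‖ * ‖Φ k‖) := by ring
  have hpos : 0 < ‖a k‖ * ‖Φ k‖ := mul_pos (norm_pos_iff.2 hak) (norm_pos_iff.2 hSk)
  refine le_of_mul_le_mul_right ?_ hpos
  calc t * (‖a k‖ * ‖Φ k‖) = t * ‖∑ i ∈ Ico 1 k, a i * Φ i‖ := by
        rw [← norm_mul, htop, norm_neg]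
    _ ≤ ∑ i ∈ Ico 1 k, t * ‖a i * Φ i‖ := by
        rw [← mul_sum]
        exact mul_le_mul_of_nonneg_left (norm_sum_le _ _) (by linarith)
    _ ≤ ∑ i ∈ Ico 1 k, A * (‖a k‖ * ‖Φ k‖) := sum_le_sum hterm
    _ = (k - 1 : ℕ) * A * (‖a k‖ * ‖Φ k‖) := by
        rw [sum_const, Nat.card_Ico, nsmul_eq_mul, mul_assoc]

theorem eval_iterate_derivative_eq_zero_of_pow_dvd {R : Type*} [CommRing R] {F : R[X]} {t : R}
    {i j : ℕ} (h : (X - C t) ^ j ∣ F) (hij : i < j) : (derivative^[i] F).eval t = 0 :=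
  dvd_iff_isRoot.1 <| (dvd_pow_self _ (Nat.sub_ne_zero_of_lt hij)).trans
    (pow_sub_dvd_iterate_derivative_of_pow_dvd i h)

theorem eval_iterate_derivative_mul_of_pow_dvd {R : Type*} [CommRing R] {p F : R[X]} {t : R}
    {j : ℕ} (h : (X - C t) ^ j ∣ F) :
    (derivative^[j] (p * F)).eval t = p.eval t * (derivative^[j] F).eval t := by
  rw [iterate_derivative_mul, eval_finsetSum, sum_eq_single_of_mem j (self_mem_range_succ j)]
  · simp
  · intro a ha haj
    have haj : a < j := lt_of_le_of_ne (mem_range_succ_iff.1 ha) haj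
    rw [eval_smul, eval_mul, eval_iterate_derivative_eq_zero_of_pow_dvd h haj, mul_zero,
      smul_zero]

theorem norm_eval_le_of_degree_le {d : ℕ} (hd : P.degree ≤ d) {M : ℝ} (hM : 1 ≤ M)
    (hw : ‖w‖ ≤ M) : ‖P.eval w‖ ≤ (∑ a ∈ range (d + 1), ‖P.coeff a‖) * M ^ d := by
  rw [eval_eq_sum_range' (Nat.lt_succ_of_le (natDegree_le_iff_degree_le.2 hd)), sum_mul]
  refine (norm_sum_le _ _).trans (sum_le_sum fun a ha => ?_)
  rw [norm_mul, norm_pow]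
  gcongr
  calc ‖w‖ ^ a ≤ M ^ a := by gcongr
    _ ≤ M ^ d := pow_le_pow_right₀ hM (Nat.lt_succ_iff.1 (mem_range.1 ha))

theorem norm_leadingCoeff_mul_sub_pow_le_norm_eval {R : ℝ} (hroots : ∀ z ∈ P.roots, ‖z‖ ≤ R)
    (hw : R ≤ ‖w‖) : ‖P.leadingCoeff‖ * (‖w‖ - R) ^ P.natDegree ≤ ‖P.eval w‖ := by
  have hP := IsAlgClosed.splits P
  have hprod : ‖(P.roots.map (w - ·)).prod‖ = (P.roots.map (‖w - ·‖)).prod := by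
    simpa [Multiset.map_map] using map_multiset_prod (normHom : ℂ →*₀ ℝ) (P.roots.map (w - ·))
  rw [hP.eval_eq_prod_roots, norm_mul, hprod, ← splits_iff_card_roots.1 hP,
    ← Multiset.prod_replicate, ← Multiset.map_const']
  gcongr
  refine Multiset.prod_map_le_prod_map₀ _ _ (fun _ _ => sub_nonneg.2 hw) fun z hz => ?_
  linarith [norm_sub_norm_le w z, hroots z hz]

theorem exists_pow_mul_norm_eval_le {Q : ℂ[X]} {m e : ℕ} (hP : P.degree ≤ m)
    (hQ : Q.degree = ↑(m + e)) {R ε : ℝ} (hR : 0 ≤ R) (hε : 0 < ε)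
    (hroots : ∀ z ∈ Q.roots, ‖z‖ ≤ R) :
    ∃ A, ∀ w : ℂ, R + ε < ‖w‖ → ‖w‖ ^ e * ‖P.eval w‖ ≤ A * ‖Q.eval w‖ := by
  have hQ0 : Q ≠ 0 := by
    rintro rfl
    exact WithBot.bot_ne_coe (degree_zero.symm.trans hQ)
  have hq : 0 < ‖Q.leadingCoeff‖ := norm_pos_iff.2 (leadingCoeff_ne_zero.2 hQ0)
  set C := ∑ a ∈ range (m + 1), ‖P.coeff a‖
  set K := (1 + R + ε) / ε
  refine ⟨C * K ^ (m + e) / ‖Q.leadingCoeff‖, fun w hw => ?_⟩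
  have hK : 1 + ‖w‖ ≤ K * (‖w‖ - R) := by
    rw [div_mul_eq_mul_div, le_div_iff₀ hε]
    nlinarith
  have hlow := norm_leadingCoeff_mul_sub_pow_le_norm_eval hroots (by linarith : R ≤ ‖w‖)
  rw [natDegree_eq_of_degree_eq_some hQ] at hlow
  calc ‖w‖ ^ e * ‖P.eval w‖ ≤ (1 + ‖w‖) ^ e * (C * (1 + ‖w‖) ^ m) := by
        gcongr
        · linarith
        · exact norm_eval_le_of_degree_le hP (by linarith [norm_nonneg w]) (by linarith)
    _ = C * (1 + ‖w‖) ^ (m + e) := by ring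
    _ ≤ C * (K * (‖w‖ - R)) ^ (m + e) := by gcongr
    _ = C * K ^ (m + e) / ‖Q.leadingCoeff‖ * (‖Q.leadingCoeff‖ * (‖w‖ - R) ^ (m + e)) := by
        rw [mul_pow]
        field_simp
    _ ≤ C * K ^ (m + e) / ‖Q.leadingCoeff‖ * ‖Q.eval w‖ := by gcongr

theorem norm_le_of_forall_not_isRoot {c : ℝ}
    (h : ∀ w : ℂ, c < ‖w‖ → (∀ z ∈ P.roots, ‖z‖ ≤ ‖w‖) → ¬P.IsRoot w) :
    ∀ z ∈ P.roots, ‖z‖ ≤ c := by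
  intro z hz
  obtain ⟨z₀, hz₀, hmax⟩ :=
    Multiset.exists_max_image (‖·‖) fun h0 : P.roots = 0 => by simp [h0] at hz
  by_contra! hc
  exact h z₀ (hc.trans_le (hmax z hz)) hmax (isRoot_of_mem_roots hz₀)

end Polynomial

theorem isRoot_of_lt_rootMultiplicity_of_sum_eq_zero {K : Type*} [Field K] [CharZero K] {k : ℕ}
    (hk : 1 ≤ k) {Q : ℕ → K[X]} {V S : K[X]} (hS : S ≠ 0)
    (h : ∑ i ∈ Icc 1 k, Q i * derivative^[i] S + V * S = 0) {t : K}
    (hm : k < S.rootMultiplicity t) : (Q k).IsRoot t := by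
  set m := S.rootMultiplicity t
  have hdvd : (X - C t) ^ m ∣ S := pow_rootMultiplicity_dvd S t
  have hlow : ∀ i ∈ Ico 1 k, (derivative^[m - k] (Q i * derivative^[i] S)).eval t = 0 :=
    fun i hi => eval_iterate_derivative_eq_zero_of_pow_dvd
      ((pow_sub_dvd_iterate_derivative_of_pow_dvd i hdvd).mul_left _) (by grind)
  have htop : (derivative^[m - k] (Q k * derivative^[k] S)).eval t =
      (Q k).eval t * (derivative^[m] S).eval t := by
    rw [eval_iterate_derivative_mul_of_pow_dvd (pow_sub_dvd_iterate_derivative_of_pow_dvd k hdvd),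
      ← Function.iterate_add_apply, Nat.sub_add_cancel hm.le]
  have hVS : (derivative^[m - k] (V * S)).eval t = 0 :=
    eval_iterate_derivative_eq_zero_of_pow_dvd (hdvd.mul_left V) (by omega)
  have := congrArg (fun p => (derivative^[m - k] p).eval t) h
  simp only [iterate_map_add, iterate_derivative_sum, eval_add, eval_finsetSum, hVS,
    ← Ico_insert_right hk, sum_insert right_notMem_Ico, sum_eq_zero hlow, htop,
    iterate_map_zero, eval_zero, add_zero] at this
  exact (mul_eq_zero.1 this).resolve_right (eval_iterate_derivative_rootMultiplicity_ne_zero hS t)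

theorem exists_forall_pow_mul_norm_eval_le {k r : ℕ} {Q : ℕ → ℂ[X]}
    (hdeg : ∀ i ∈ Ico 1 k, (Q i).degree ≤ ↑(i + r)) (hQk : (Q k).degree = ↑(k + r))
    {R ε : ℝ} (hR : 0 ≤ R) (hε : 0 < ε) (hroots : ∀ z ∈ (Q k).roots, ‖z‖ ≤ R) :
    ∃ A, ∀ w : ℂ, R + ε < ‖w‖ → ∀ i ∈ Ico 1 k,
      (2 * ‖w‖) ^ (k - i) * ‖(Q i).eval w‖ ≤ A * ‖(Q k).eval w‖ := by
  have h : ∀ i ∈ Ico 1 k, ∀ᶠ A in atTop, ∀ w : ℂ, R + ε < ‖w‖ →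
      (2 * ‖w‖) ^ (k - i) * ‖(Q i).eval w‖ ≤ A * ‖(Q k).eval w‖ := by
    intro i hi
    have hQk' : (Q k).degree = ↑(i + r + (k - i)) := by
      have hik := (mem_Ico.1 hi).2
      rw [hQk]
      congr 1
      omega
    obtain ⟨A, hA⟩ := exists_pow_mul_norm_eval_le (hdeg i hi) hQk' hR hε hroots
    filter_upwards [eventually_ge_atTop (2 ^ (k - i) * A)] with A' hA' w hw
    calc (2 * ‖w‖) ^ (k - i) * ‖(Q i).eval w‖
        = 2 ^ (k - i) * (‖w‖ ^ (k - i) * ‖(Q i).eval w‖) := by ring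
      _ ≤ 2 ^ (k - i) * (A * ‖(Q k).eval w‖) := mul_le_mul_of_nonneg_left (hA w hw) (by positivity)
      _ ≤ A' * ‖(Q k).eval w‖ := by rw [← mul_assoc]; gcongr
  obtain ⟨A, hA⟩ := ((eventually_all_finset _).2 h).exists
  exact ⟨A, fun w hw i hi => hA i hi w hw⟩

theorem stmt_13 (k r : ℕ) (hk : 1 ≤ k) (Q : ℕ → Polynomial ℂ)
    (hdeg : ∀ i, 1 ≤ i → i ≤ k → (Q i).degree ≤ (i + r : ℕ))
    (hQk : (Q k).degree = (k + r : ℕ))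
    (R : ℝ) (hR : IsGreatest ((fun z : ℂ => ‖z‖) '' {z : ℂ | z ∈ (Q k).roots}) R)
    (δ : ℝ) (hδ : 0 < δ) :
    ∃ N : ℕ, ∀ n ≥ N, ∀ V S : Polynomial ℂ, V.degree ≤ (r : ℕ) → S ≠ 0 →
      S.natDegree = n →
      ∑ i ∈ Finset.Icc 1 k, Q i * (Polynomial.derivative^[i] S) + V * S = 0 →
      (∀ z ∈ V.roots, ‖z‖ ≤ R + δ) ∧
      (∀ z ∈ S.roots, ‖z‖ ≤ R + δ) := by
  obtain ⟨⟨x, -, rfl⟩, hmax⟩ := hR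
  have hroots : ∀ z ∈ (Q k).roots, ‖z‖ ≤ ‖x‖ := fun z hz => hmax ⟨z, hz, rfl⟩
  have hQk0 : Q k ≠ 0 := by
    rintro h
    exact WithBot.bot_ne_coe ((degree_eq_bot.2 h).symm.trans hQk)
  obtain ⟨A, hA⟩ := exists_forall_pow_mul_norm_eval_le
    (fun i hi => hdeg i (mem_Ico.1 hi).1 (mem_Ico.1 hi).2.le) hQk (norm_nonneg x) (half_pos hδ)
    hroots
  refine ⟨k + ⌈(k - 1 : ℕ) * A⌉₊, fun n hn V S _ hS hSn hL => ?_⟩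
  have hfar : ∀ w : ℂ, ‖x‖ + δ / 2 < ‖w‖ → (∀ z ∈ S.roots, ‖z‖ ≤ ‖w‖) →
      V.eval w * S.eval w ≠ 0 := by
    intro w hw hSw hVS
    have hQkw : ¬(Q k).IsRoot w := fun h => by linarith [hroots w ((mem_roots hQk0).2 h)]
    have hm : S.rootMultiplicity w ≤ k :=
      not_lt.1 fun hm => hQkw (isRoot_of_lt_rootMultiplicity_of_sum_eq_zero hk hS hL hm)
    have hsum : ∑ i ∈ Icc 1 k, (Q i).eval w * (derivative^[i] S).eval w = 0 := by
      simpa [eval_finsetSum, hVS] using congrArg (eval w) hL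
    have hkn : k ≤ S.natDegree := by omega
    have hbound := natDegree_sub_le_of_sum_eq_zero (a := fun i => (Q i).eval w) hSw hk hkn
      (eval_iterate_derivative_ne_zero_of_rootMultiplicity_le hSw hS hkn hm) hQkw (hA w hw) hsum
    have hn' : (k : ℝ) + ⌈(k - 1 : ℕ) * A⌉₊ ≤ S.natDegree := by exact_mod_cast hSn ▸ hn
    linarith [Nat.le_ceil ((k - 1 : ℕ) * A)]
  have hSroots := norm_le_of_forall_not_isRoot fun w hw hSw hroot =>
    hfar w hw hSw (by rw [hroot.eq_zero, mul_zero])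
  refine ⟨fun z hz => ?_, fun z hz => (hSroots z hz).trans (by linarith)⟩
  by_contra! hz'
  exact hfar z (by linarith) (fun ξ hξ => (hSroots ξ hξ).trans (by linarith))
    (by rw [(isRoot_of_mem_roots hz).eq_zero, zero_mul])
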